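/- arXiv:1111.0871 — 4 statements merged into one kernel-verified Lean document; each statement's English description precedes it below -/
import Mathlib

section
/- Let T be a simplicial tree and s an automorphism of T. If e is an oriented edge of T with e ≠ s·e and s acts coherently on e (i.e., e and s·e are consistently oriented, pointing neither toward nor away from each other), then s is hyperbolic (has no fixed point) and both e and s·e lie on the axis of s. -/
/-!
Write `ℓ = d(u, s u)`. Coherence places the edges `(u, v)` and `s (u, v)` in this order on one
geodesic; in a tree this propagates, so all translates `s ^ n (u, v)` line up along a geodesic
and `d(u, s ^ n u) = n ℓ`. Such a linearly escaping orbit forces minimal displacement at `u`,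
since `n ℓ ≤ 2 d(u, y) + n d(y, s y)` for every `y` and `n`. The same estimate for `s ^ k` shows
that no power of `s` fixes a vertex, which excludes fixed vertices (`k = 1`) and inverted edges
(`k = 2`). Finally `v`, `s u` and `s v` have the same displacement as `u`.
-/

namespace SimpleGraph

variable {V W : Type*} {G : SimpleGraph V} {a b c x y : V}

theorem Iso.dist_le {H : SimpleGraph W} (g : G ≃g H) (x y : V) :
    H.dist (g x) (g y) ≤ G.dist x y := by
  by_cases h : G.Reachable x y
  · obtain ⟨p, hp⟩ := h.exists_walk_length_eq_dist
    calc H.dist (g x) (g y) ≤ (p.map g.toHom).length := SimpleGraph.dist_le _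
      _ = G.dist x y := by rw [Walk.length_map, hp]
  · rw [dist_eq_zero_of_not_reachable (g.reachable_iff.not.mpr h)]
    exact Nat.zero_le _

theorem Iso.dist_eq {H : SimpleGraph W} (g : G ≃g H) (x y : V) :
    H.dist (g x) (g y) = G.dist x y :=
  (g.dist_le x y).antisymm (by simpa using g.symm.dist_le (g x) (g y))

theorem Walk.dist_add_dist_le_length (p : G.Walk x y) (hc : c ∈ p.support) :
    G.dist x c + G.dist c y ≤ p.length := by
  classical
  calc G.dist x c + G.dist c y ≤ (p.takeUntil c hc).length + (p.dropUntil c hc).length :=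
        Nat.add_le_add (dist_le _) (dist_le _)
    _ = p.length := by rw [← Walk.length_append, p.take_spec hc]

theorem IsAcyclic.length_eq_dist_of_isPath (hG : G.IsAcyclic) {p : G.Walk x y} (hp : p.IsPath) :
    p.length = G.dist x y := by
  obtain ⟨q, hq, hql⟩ := p.reachable.exists_path_of_dist
  rw [← hql, Subtype.mk.inj ((hG.subsingleton_path x y).elim ⟨p, hp⟩ ⟨q, hq⟩)]

theorem IsTree.dist_eq_dist_add_one_add_dist (hG : G.IsTree) (hab : G.Adj a b)
    (hx : G.dist x a < G.dist x b) (hy : G.dist y b < G.dist y a) :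
    G.dist x y = G.dist x a + 1 + G.dist b y := by
  have hc := hG.connected
  obtain ⟨p, hp, hpl⟩ := hc.exists_path_of_dist x a
  obtain ⟨q, hq, hql⟩ := hc.exists_path_of_dist b y
  have hdisj : ∀ c ∈ p.support, c ∉ q.support := by
    intro c hcp hcq
    have h₁ := p.dist_add_dist_le_length hcp
    have h₂ := q.dist_add_dist_le_length hcq
    have h₃ : G.dist x b ≤ G.dist x c + G.dist c b := hc.dist_triangle
    have h₄ : G.dist y a ≤ G.dist y c + G.dist c a := hc.dist_triangle
    have : G.dist c b = G.dist b c := dist_comm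
    have : G.dist y c = G.dist c y := dist_comm
    have : G.dist y b = G.dist b y := dist_comm
    omega
  have hpath : (p.append (.cons hab q)).IsPath := by
    rw [Walk.isPath_def, Walk.support_append, Walk.support_cons, List.tail_cons,
      List.nodup_append]
    exact ⟨hp.support_nodup, hq.support_nodup, fun c hcp d hdq h => hdisj c hcp (h ▸ hdq)⟩
  rw [← hG.isAcyclic.length_eq_dist_of_isPath hpath, Walk.length_append, Walk.length_cons,
    hpl, hql]
  ring

theorem Connected.dist_eq_add_one_of_dist_eq_add_two (hG : G.Connected) {a' b' : V}
    (hab : G.Adj a b) (hab' : G.Adj a' b') (h : G.dist a b' = G.dist b a' + 2) :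
    G.dist a a' = G.dist b a' + 1 ∧ G.dist b b' = G.dist b a' + 1 := by
  have := dist_eq_one_iff_adj.mpr hab
  have := dist_eq_one_iff_adj.mpr hab'
  have : G.dist a a' ≤ G.dist a b + G.dist b a' := hG.dist_triangle
  have : G.dist a b' ≤ G.dist a a' + G.dist a' b' := hG.dist_triangle
  have : G.dist b b' ≤ G.dist b a' + G.dist a' b' := hG.dist_triangle
  have : G.dist a b' ≤ G.dist a b + G.dist b b' := hG.dist_triangle
  omega

theorem Iso.pow_succ_apply (g : G ≃g G) (n : ℕ) (x : V) : (g ^ (n + 1)) x = (g ^ n) (g x) := by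
  rw [pow_succ, RelIso.mul_apply]

theorem Connected.dist_pow_apply_le (hG : G.Connected) (g : G ≃g G) (y : V) (n : ℕ) :
    G.dist y ((g ^ n) y) ≤ n * G.dist y (g y) := by
  induction n with
  | zero => simp
  | succ n ih =>
    calc G.dist y ((g ^ (n + 1)) y)
        ≤ G.dist y ((g ^ n) y) + G.dist ((g ^ n) y) ((g ^ n) (g y)) := by
          rw [g.pow_succ_apply]; exact hG.dist_triangle
      _ ≤ (n + 1) * G.dist y (g y) := by rw [(g ^ n).dist_eq]; linarith

theorem Connected.le_dist_apply_of_forall_mul_le (hG : G.Connected) (g : G ≃g G) {ℓ : ℕ}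
    (h : ∀ n : ℕ, n * ℓ ≤ G.dist x ((g ^ n) x)) (y : V) : ℓ ≤ G.dist y (g y) := by
  by_contra! hlt
  -- `n = 2 d(x, y) + 1` is large enough to contradict `n ℓ ≤ 2 d(x, y) + n d(y, g y)`.
  obtain ⟨n, hn⟩ : ∃ n, n = 2 * G.dist x y + 1 := ⟨_, rfl⟩
  have hgrowth : G.dist x ((g ^ n) x) ≤ 2 * G.dist x y + n * G.dist y (g y) :=
    calc G.dist x ((g ^ n) x)
        ≤ G.dist x y + G.dist y ((g ^ n) y) + G.dist ((g ^ n) y) ((g ^ n) x) :=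
          hG.dist_triangle.trans (by gcongr; exact hG.dist_triangle)
      _ ≤ 2 * G.dist x y + n * G.dist y (g y) := by
          rw [(g ^ n).dist_eq, dist_comm (u := y) (v := x)]
          linarith [hG.dist_pow_apply_le g y n]
  have : n * (G.dist y (g y) + 1) ≤ n * ℓ := Nat.mul_le_mul_left n hlt
  linarith [h n]

theorem Connected.pow_apply_ne_of_forall_mul_le (hG : G.Connected) (g : G ≃g G) {ℓ : ℕ}
    (hℓ : 0 < ℓ) (h : ∀ n : ℕ, n * ℓ ≤ G.dist x ((g ^ n) x)) {k : ℕ} (hk : 0 < k)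
    (a : V) : (g ^ k) a ≠ a := by
  intro ha
  have hk' : k * ℓ ≤ G.dist a ((g ^ k) a) :=
    hG.le_dist_apply_of_forall_mul_le (g ^ k) (fun n => by
      rw [← pow_mul, show n * (k * ℓ) = k * n * ℓ by ring]; exact h (k * n)) a
  rw [ha, dist_self] at hk'
  exact (Nat.mul_pos hk hℓ).not_ge hk'

theorem IsTree.dist_pow_apply_of_dist_eq_add_two (hG : G.IsTree) (s : G ≃g G) {u v : V}
    (huv : G.Adj u v) (hcoh : G.dist u (s v) = G.dist v (s u) + 2) (n : ℕ) :
    G.dist u ((s ^ n) u) = n * G.dist u (s u) := by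
  obtain ⟨hu, hv⟩ :=
    hG.connected.dist_eq_add_one_of_dist_eq_add_two huv (s.map_adj_iff.mpr huv) hcoh
  -- The second conjunct says that `u` lies on the `(s ^ n) u` side of the edge `s ^ n (u, v)`.
  suffices ∀ n : ℕ, G.dist u ((s ^ n) u) = n * G.dist u (s u) ∧
      G.dist u ((s ^ n) v) = n * G.dist u (s u) + 1 from (this n).1
  intro n
  induction n with
  | zero => simp [dist_eq_one_iff_adj.mpr huv]
  | succ n ih =>
    have hadj : G.Adj ((s ^ n) u) ((s ^ n) v) := (s ^ n).map_adj_iff.mpr huv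
    have hd : ∀ p q, G.dist ((s ^ n) p) ((s ^ n) q) = G.dist p q := (s ^ n).dist_eq
    have hsu_u : G.dist ((s ^ n) (s u)) ((s ^ n) u) = G.dist u (s u) := by rw [hd, dist_comm]
    have hsu_v : G.dist ((s ^ n) (s u)) ((s ^ n) v) = G.dist v (s u) := by rw [hd, dist_comm]
    have hsv_u : G.dist ((s ^ n) (s v)) ((s ^ n) u) = G.dist u (s v) := by rw [hd, dist_comm]
    have hsv_v : G.dist ((s ^ n) (s v)) ((s ^ n) v) = G.dist v (s v) := by rw [hd, dist_comm]
    have hdu := hG.dist_eq_dist_add_one_add_dist hadj (x := u) (y := (s ^ n) (s u))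
      (by omega) (by omega)
    have hdv := hG.dist_eq_dist_add_one_add_dist hadj (x := u) (y := (s ^ n) (s v))
      (by omega) (by omega)
    rw [s.pow_succ_apply, s.pow_succ_apply, hdu, hdv, hd, hd, ih.1]
    simp only [add_mul, one_mul]
    constructor <;> omega

end SimpleGraph

theorem stmt0_general {V : Type*} (T : SimpleGraph V) (hT : T.IsTree)
    (s : T ≃g T) (u v : V) (huv : T.Adj u v)
    (hcoh : T.dist u (s v) = T.dist v (s u) + 2 ∨
            T.dist (s u) v = T.dist (s v) u + 2) :
    ((∀ x : V, s x ≠ x) ∧ (∀ a b : V, T.Adj a b → ¬(s a = b ∧ s b = a))) ∧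
      ((∀ y : V, T.dist u (s u) ≤ T.dist y (s y)) ∧
       (∀ y : V, T.dist v (s v) ≤ T.dist y (s y)) ∧
       (∀ y : V, T.dist (s u) (s (s u)) ≤ T.dist y (s y)) ∧
       (∀ y : V, T.dist (s v) (s (s v)) ≤ T.dist y (s y))) := by
  have hc := hT.connected
  obtain ⟨x, hgrowth, hpos, hu, hv⟩ : ∃ x,
      (∀ n : ℕ, n * T.dist x (s x) ≤ T.dist x ((s ^ n) x)) ∧ 0 < T.dist x (s x) ∧
        T.dist u (s u) = T.dist x (s x) ∧ T.dist v (s v) = T.dist x (s x) := by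
    rcases hcoh with h | h
    · obtain ⟨h₁, h₂⟩ :=
        hc.dist_eq_add_one_of_dist_eq_add_two huv (s.map_adj_iff.mpr huv) h
      exact ⟨u, fun n => (hT.dist_pow_apply_of_dist_eq_add_two s huv h n).ge, by omega, rfl,
        by omega⟩
    · rw [SimpleGraph.dist_comm, SimpleGraph.dist_comm (u := s v)] at h
      obtain ⟨h₁, h₂⟩ :=
        hc.dist_eq_add_one_of_dist_eq_add_two huv.symm (s.map_adj_iff.mpr huv.symm) h
      exact ⟨v, fun n => (hT.dist_pow_apply_of_dist_eq_add_two s huv.symm h n).ge, by omega,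
        by omega, rfl⟩
  have hmin := hc.le_dist_apply_of_forall_mul_le s hgrowth
  have hfree := fun k (hk : 0 < k) => hc.pow_apply_ne_of_forall_mul_le s hpos hgrowth hk
  refine ⟨⟨fun y => by simpa using hfree 1 one_pos y, fun a b _ ⟨hab, hba⟩ =>
      hfree 2 two_pos a (by rw [pow_two, RelIso.mul_apply, hab, hba])⟩,
    hu ▸ hmin, hv ▸ hmin, ?_, ?_⟩
  · rw [s.dist_eq, hu]; exact hmin
  · rw [s.dist_eq, hv]; exact hmin

/-- Let `T` be a simplicial tree and `s` an automorphism of `T`.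
If `e = (u,v)` is an oriented edge with `e ≠ s·e` and `s` acts coherently on `e`
(`e` and `s·e` are consistently oriented along the path joining them), then `s`
is hyperbolic (fixes no vertex and no edge) and both `e` and `s·e` lie on the
axis of `s` (the set of vertices of minimal displacement). -/
theorem stmt0 {V : Type*} (T : SimpleGraph V) (hT : T.IsTree)
    (s : T ≃g T) (u v : V) (huv : T.Adj u v)
    (hne : (u, v) ≠ (s u, s v))
    (hcoh : T.dist u (s v) = T.dist v (s u) + 2 ∨
            T.dist (s u) v = T.dist (s v) u + 2) :
    ((∀ x : V, s x ≠ x) ∧ (∀ a b : V, T.Adj a b → ¬(s a = b ∧ s b = a))) ∧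
      ((∀ y : V, T.dist u (s u) ≤ T.dist y (s y)) ∧
       (∀ y : V, T.dist v (s v) ≤ T.dist y (s y)) ∧
       (∀ y : V, T.dist (s u) (s (s u)) ≤ T.dist y (s y)) ∧
       (∀ y : V, T.dist (s v) (s (s v)) ≤ T.dist y (s y))) :=
  stmt0_general T hT s u v huv hcoh
end

section
/- Let G be a group acting cocompactly by simplicial automorphisms on a locally finite simplicial tree T, and let E be an end of T. For any geodesic ray τ representing E, any real number r, and any oriented edge e of T oriented toward E, there exists an element g ∈ G such that g·e is oriented toward E and g·e does not lie in the horoball HB_r(τ). -/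
/-!
Cocompactness and local finiteness leave finitely many `G`-orbits of oriented edges, so two edges
`(τ n, τ (n+1))` and `(τ m, τ (m+1))` of the ray far out, with `n < m`, are identified by some
`h ∈ G` with `h • τ m = τ n`. In a tree, once the ray moves away from a vertex it keeps moving
away, so for every vertex `x` from which the ray recedes at `n` the distances `d(x, τ j)` are
eventually `d(x, τ n) + (j - n)`, and `h` preserves this shape while adding `m - n` to
`d(x, τ n)`. Hence `h ^ k` keeps the given edge oriented toward the end while lowering the Busemann
function by `k (m - n) ≥ k`, which eventually pushes it out of any horoball.
-/

/-- A geodesic ray in a tree: an injective sequence of consecutively adjacent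
vertices (in a tree, injectivity of a combinatorial path is equivalent to it
being geodesic). -/
def IsGeodRay {V : Type*} (T : SimpleGraph V) (τ : ℕ → V) : Prop :=
  (∀ n, T.Adj (τ n) (τ (n + 1))) ∧ Function.Injective τ

/-- `p` lies in the horoball `HB_r(τ)`, i.e. the Busemann function
`β_τ(p) = lim_n (n - d(τ(n), p))` (the limit of a nondecreasing sequence,
so membership is an existential) is at least `r`. -/
def InHoroball {V : Type*} (T : SimpleGraph V) (τ : ℕ → V) (r : ℝ) (p : V) : Prop :=
  ∃ n : ℕ, r ≤ (n : ℝ) - (T.dist (τ n) p : ℝ)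

/-- The oriented edge `(a, b)` points toward the end represented by the geodesic
ray `τ`: the geodesic from `a` to the end passes through the edge, i.e. eventually
`d(b, τ(n)) + 1 = d(a, τ(n))`. -/
def EdgeTowardEnd {V : Type*} (T : SimpleGraph V) (τ : ℕ → V) (a b : V) : Prop :=
  T.Adj a b ∧ ∃ N : ℕ, ∀ n ≥ N, T.dist b (τ n) + 1 = T.dist a (τ n)

open SimpleGraph

namespace SimpleGraph

variable {V : Type*} {T : SimpleGraph V}

lemma Hom.dist_map_le {W : Type*} {T' : SimpleGraph W} (f : T →g T') {x y : V}
    (hxy : T.Reachable x y) : T'.dist (f x) (f y) ≤ T.dist x y := by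
  obtain ⟨p, hp⟩ := hxy.exists_walk_length_eq_dist
  exact (dist_le (p.map f)).trans (by rw [Walk.length_map, hp])

lemma dist_smul_smul {G : Type*} [Group G] [MulAction G V] (hT : T.Connected)
    (hact : ∀ (g : G) (x y : V), T.Adj x y → T.Adj (g • x) (g • y)) (g : G) (x y : V) :
    T.dist (g • x) (g • y) = T.dist x y := by
  have hle (g : G) (x y : V) : T.dist (g • x) (g • y) ≤ T.dist x y :=
    Hom.dist_map_le ⟨(g • ·), hact g _ _⟩ (hT x y)
  refine (hle g x y).antisymm ?_
  simpa only [inv_smul_smul] using hle g⁻¹ (g • x) (g • y)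

lemma IsTree.eq_of_adj_of_dist_add_one_eq (hT : T.IsTree) {x u v w : V} (hu : T.Adj u v)
    (hw : T.Adj w v) (hdu : T.dist x u + 1 = T.dist x v) (hdw : T.dist x w + 1 = T.dist x v) :
    u = w := by
  obtain ⟨p, -, hp⟩ := hT.connected.exists_path_of_dist x u
  obtain ⟨q, -, hq⟩ := hT.connected.exists_path_of_dist x w
  have hpu : (p.concat hu).IsPath :=
    (p.concat hu).isPath_of_length_eq_dist (by rw [Walk.length_concat, hp, hdu])
  have hqw : (q.concat hw).IsPath :=
    (q.concat hw).isPath_of_length_eq_dist (by rw [Walk.length_concat, hq, hdw])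
  have heq : p.concat hu = q.concat hw :=
    congrArg Subtype.val ((hT.isAcyclic.subsingleton_path x v).elim ⟨_, hpu⟩ ⟨_, hqw⟩)
  simpa only [Walk.penultimate_concat] using congrArg Walk.penultimate heq

end SimpleGraph

namespace IsGeodRay

variable {V : Type*} {T : SimpleGraph V} {τ : ℕ → V}

/-- Once a ray in a tree starts moving away from `x`, it keeps doing so: otherwise `τ n` and
`τ (n + 2)` would both be the neighbour of `τ (n + 1)` on its geodesic to `x`. -/
lemma dist_succ_succ (hT : T.IsTree) (hτ : IsGeodRay T τ) {x : V} {n : ℕ}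
    (hn : T.dist x (τ (n + 1)) = T.dist x (τ n) + 1) :
    T.dist x (τ (n + 2)) = T.dist x (τ (n + 1)) + 1 := by
  refine (hT.dist_eq_dist_add_one_of_adj x (hτ.1 (n + 1))).resolve_left fun hback => ?_
  have := hT.eq_of_adj_of_dist_add_one_eq (hτ.1 n) (hτ.1 (n + 1)).symm hn.symm hback.symm
  exact absurd (hτ.2 this) (by omega)

lemma dist_succ_of_le (hT : T.IsTree) (hτ : IsGeodRay T τ) {x : V} {n : ℕ}
    (hn : T.dist x (τ (n + 1)) = T.dist x (τ n) + 1) {j : ℕ} (hj : n ≤ j) :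
    T.dist x (τ (j + 1)) = T.dist x (τ j) + 1 := by
  induction j, hj using Nat.le_induction with
  | base => exact hn
  | succ j _ ih => exact hτ.dist_succ_succ hT ih

lemma dist_add_eq (hT : T.IsTree) (hτ : IsGeodRay T τ) {x : V} {n : ℕ}
    (hn : T.dist x (τ (n + 1)) = T.dist x (τ n) + 1) {j : ℕ} (hj : n ≤ j) :
    T.dist x (τ j) + n = T.dist x (τ n) + j := by
  induction j, hj using Nat.le_induction with
  | base => rfl
  | succ j hnj ih => rw [hτ.dist_succ_of_le hT hn hnj]; omega

lemma dist_self_succ (hτ : IsGeodRay T τ) (n : ℕ) :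
    T.dist (τ n) (τ (n + 1)) = T.dist (τ n) (τ n) + 1 := by
  rw [dist_self, dist_eq_one_iff_adj.mpr (hτ.1 n)]

/-- Distances to `x` along the ray cannot decrease forever, and in a tree each step changes them
by exactly one. -/
lemma exists_dist_succ (hT : T.IsTree) (hτ : IsGeodRay T τ) (x : V) (N : ℕ) :
    ∃ n ≥ N, T.dist x (τ (n + 1)) = T.dist x (τ n) + 1 := by
  by_contra! hnot
  have hdecr (t : ℕ) : T.dist x (τ (N + t)) + t = T.dist x (τ N) := by
    induction t with
    | zero => rfl
    | succ t ih =>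
      have := (hT.dist_eq_dist_add_one_of_adj x (hτ.1 (N + t))).resolve_right
        (hnot (N + t) (by omega))
      show T.dist x (τ (N + t + 1)) + (t + 1) = _
      omega
  have := hdecr (T.dist x (τ N) + 1)
  omega

/-- The Busemann sequence `j - d(τ j, x)` is bounded by its eventual value. -/
lemma add_dist_le (hT : T.IsTree) (hτ : IsGeodRay T τ) {x : V} {n : ℕ}
    (hn : T.dist x (τ (n + 1)) = T.dist x (τ n) + 1) (j : ℕ) :
    j + T.dist x (τ n) ≤ n + T.dist x (τ j) := by
  have hx := hτ.dist_add_eq hT hn (le_max_right j n)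
  have hray := hτ.dist_add_eq hT (hτ.dist_self_succ j) (le_max_left j n)
  have htri := hT.connected.dist_triangle (u := x) (v := τ j) (w := τ (max j n))
  rw [dist_self] at hray
  omega

lemma dist_pow_smul (hT : T.IsTree) (hτ : IsGeodRay T τ) {G : Type*} [Group G] [MulAction G V]
    (hact : ∀ (g : G) (x y : V), T.Adj x y → T.Adj (g • x) (g • y)) {n m : ℕ} (hnm : n ≤ m)
    {h : G} (hm : h • τ m = τ n) (hm' : h • τ (m + 1) = τ (n + 1)) {x : V}
    (hx : T.dist x (τ (n + 1)) = T.dist x (τ n) + 1) (k : ℕ) :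
    T.dist (h ^ k • x) (τ n) + k * n = T.dist x (τ n) + k * m ∧
      T.dist (h ^ k • x) (τ (n + 1)) = T.dist (h ^ k • x) (τ n) + 1 := by
  induction k with
  | zero => simpa using hx
  | succ k ih =>
    obtain ⟨ihn, ihmove⟩ := ih
    have hdist (i : ℕ) : T.dist (h ^ (k + 1) • x) (τ i) = T.dist (h ^ k • x) (h⁻¹ • τ i) := by
      rw [pow_succ', mul_smul, ← dist_smul_smul hT.connected hact h⁻¹, inv_smul_smul]
    have hm_inv : h⁻¹ • τ n = τ m := by rw [← hm, inv_smul_smul]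
    have hm_inv' : h⁻¹ • τ (n + 1) = τ (m + 1) := by rw [← hm', inv_smul_smul]
    have hfar := hτ.dist_add_eq hT ihmove hnm
    rw [hdist, hdist, hm_inv, hm_inv', hτ.dist_succ_of_le hT ihmove hnm]
    constructor <;> linarith

end IsGeodRay

/-- Cocompactness and local finiteness leave finitely many orbits of oriented edges. -/
lemma exists_lt_smul_eq_of_adj {V : Type*} {T : SimpleGraph V} (hlf : T.LocallyFinite)
    {G : Type*} [Group G] [MulAction G V]
    (hact : ∀ (g : G) (x y : V), T.Adj x y → T.Adj (g • x) (g • y))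
    (hcocompact : ∃ s : Finset V, ∀ v : V, ∃ g : G, g • v ∈ s)
    (e : ℕ → V × V) (he : ∀ i, T.Adj (e i).1 (e i).2) :
    ∃ i j, i < j ∧ ∃ h : G, h • e j = e i := by
  obtain ⟨s, hs⟩ := hcocompact
  choose g hg using hs
  have hfin : ((s : Set V) ×ˢ ⋃ v ∈ s, T.neighborSet v).Finite :=
    s.finite_toSet.prod (s.finite_toSet.biUnion fun v _ => (T.neighborSet v).toFinite)
  obtain ⟨i, j, hij, hgij⟩ := hfin.exists_lt_map_eq_of_forall_mem
    (f := fun i => g (e i).1 • e i) fun i =>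
      Set.mem_prod.mpr ⟨hg _, Set.mem_biUnion (hg _) (hact _ _ _ (he i))⟩
  refine ⟨i, j, hij, (g (e i).1)⁻¹ * g (e j).1, ?_⟩
  rw [mul_smul, ← hgij, inv_smul_smul]

theorem stmt1_general {V : Type*} (T : SimpleGraph V) (hT : T.IsTree)
    (hlf : T.LocallyFinite)
    (G : Type*) [Group G] [MulAction G V]
    (hact : ∀ (g : G) (x y : V), T.Adj x y → T.Adj (g • x) (g • y))
    (hcocompact : ∃ s : Finset V, ∀ v : V, ∃ g : G, g • v ∈ s)
    (τ : ℕ → V) (hτ : IsGeodRay T τ) (r : ℝ)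
    (a b : V) (hab : EdgeTowardEnd T τ a b) :
    ∃ g : G, EdgeTowardEnd T τ (g • a) (g • b) ∧
      ¬(InHoroball T τ r (g • a) ∧ InHoroball T τ r (g • b)) := by
  obtain ⟨habAdj, N, habN⟩ := hab
  obtain ⟨n₀, hNn₀, ha₀⟩ := hτ.exists_dist_succ hT a N
  obtain ⟨i, j, hij, h, hh⟩ := exists_lt_smul_eq_of_adj hlf hact hcocompact
    (fun i => (τ (n₀ + i), τ (n₀ + i + 1))) fun i => hτ.1 (n₀ + i)
  obtain ⟨hm, hm'⟩ := Prod.ext_iff.mp hh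
  set n := n₀ + i
  set m := n₀ + j
  have hnm : n ≤ m := by omega
  have hab_n := habN n (by omega)
  have ha : T.dist a (τ (n + 1)) = T.dist a (τ n) + 1 := hτ.dist_succ_of_le hT ha₀ (by omega)
  have hb : T.dist b (τ (n + 1)) = T.dist b (τ n) + 1 := by
    have := habN (n + 1) (by omega); omega
  obtain ⟨k, hk⟩ := exists_nat_gt ((n : ℝ) - r)
  obtain ⟨ha_k, ha_k'⟩ := hτ.dist_pow_smul hT hact hnm hm hm' ha k
  obtain ⟨hb_k, hb_k'⟩ := hτ.dist_pow_smul hT hact hnm hm hm' hb k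
  refine ⟨h ^ k, ⟨hact _ _ _ habAdj, n, fun j' hj' => ?_⟩, fun ⟨⟨j', hj'⟩, _⟩ => ?_⟩
  · have := hτ.dist_add_eq hT ha_k' hj'
    have := hτ.dist_add_eq hT hb_k' hj'
    omega
  · have hbus := hτ.add_dist_le hT ha_k' j'
    have hpush : k * n + k ≤ k * m := by
      rw [← mul_add_one]; exact Nat.mul_le_mul_left k (by omega)
    have hle : j' + k ≤ n + T.dist (τ j') (h ^ k • a) := by rw [dist_comm]; omega
    have : (j' : ℝ) + k ≤ n + T.dist (τ j') (h ^ k • a) := by exact_mod_cast hle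
    linarith

/-- Let `G` act cocompactly by automorphisms on an infinite locally
finite tree `T`, let `τ` be a geodesic ray (representing an end `E`), `r` a real
number, and `(a,b)` an oriented edge of `T` oriented toward `E`.  Then some
`G`-translate of the edge is oriented toward `E` and does not lie in the
horoball `HB_r(τ)`. -/
theorem stmt1 {V : Type*} (T : SimpleGraph V) (hT : T.IsTree) (hinf : Infinite V)
    (hlf : T.LocallyFinite)
    (G : Type*) [Group G] [MulAction G V]
    (hact : ∀ (g : G) (x y : V), T.Adj x y → T.Adj (g • x) (g • y))
    (hcocompact : ∃ s : Finset V, ∀ v : V, ∃ g : G, g • v ∈ s)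
    (τ : ℕ → V) (hτ : IsGeodRay T τ) (r : ℝ)
    (a b : V) (hab : EdgeTowardEnd T τ a b) :
    ∃ g : G, EdgeTowardEnd T τ (g • a) (g • b) ∧
      ¬(InHoroball T τ r (g • a) ∧ InHoroball T τ r (g • b)) :=
  stmt1_general T hT hlf G hact hcocompact τ hτ r a b hab
end

section
/- Let q : T̃ → T be a G-equivariant tree morphism between trees, and suppose a vertex v of T lies in the image of q and some vertex ṽ of T̃ mapping near v admits an oriented edge ẽ belonging to a collapsing pair and oriented toward ṽ, with q(ẽ) not oriented toward v = q(ṽ). Then the image under q of the geodesic path in T̃ from ẽ to ṽ contains a point of backtracking, and the backtracking point closest to v yields a collapsing pair facing v. -/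
/-!
Walk along the geodesic `x₀ = ã, x₁ = b̃, …, x_d = ṽ` of `T̃` and record
`f j = d_T(q xⱼ, v)`. Since `T` is a tree, `f` changes by exactly one at each step; it goes
up at the first step (`q(ẽ)` is not oriented toward `v`) and ends at `f d = 0`, so it has a
first peak at some `x_{i+1}`. Both `q xᵢ` and `q x_{i+2}` are then neighbours of `q x_{i+1}`
closer to `v`, and in a tree there is only one such neighbour: `(x_{i+1}, xᵢ)`,
`(x_{i+1}, x_{i+2})` is a collapsing pair facing `v`.
-/

open SimpleGraph

theorem exists_peak_of_unit_steps (f : ℕ → ℕ) (d : ℕ) (hd : 0 < d)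
    (hstep : ∀ j < d, f (j + 1) + 1 = f j ∨ f j + 1 = f (j + 1))
    (hup : f 0 + 1 = f 1) (hend : f d ≤ f 0) :
    ∃ i, i + 2 ≤ d ∧ f i + 1 = f (i + 1) ∧ f (i + 2) + 1 = f (i + 1) := by
  induction d generalizing f with
  | zero => omega
  | succ d ih =>
    obtain rfl | hd := Nat.eq_zero_or_pos d
    · simp only [zero_add] at hend
      omega
    rcases hstep 1 (by omega) with hdown | hup'
    · exact ⟨0, by omega, hup, hdown⟩
    obtain ⟨i, hi, hpeak⟩ := ih (fun j ↦ f (j + 1)) hd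
      (fun j hj ↦ hstep (j + 1) (by omega)) hup' (by simp only [zero_add]; omega)
    exact ⟨i + 1, by omega, hpeak⟩

namespace SimpleGraph

variable {V : Type*} {G : SimpleGraph V}

theorem Walk.dist_getVert_of_length_eq_dist {u w : V} {p : G.Walk u w}
    (hp : p.length = G.dist u w) {n : ℕ} (hn : n ≤ p.length) :
    G.dist u (p.getVert n) = n := by
  rw [← length_eq_dist_of_subwalk hp (p.isSubwalk_take n), Walk.take_length]
  omega

theorem Walk.dist_getVert_add_dist_getVert_of_length_eq_dist {u w : V} {p : G.Walk u w}
    (hp : p.length = G.dist u w) (n : ℕ) :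
    G.dist u (p.getVert n) + G.dist (p.getVert n) w = G.dist u w := by
  rw [← length_eq_dist_of_subwalk hp (p.isSubwalk_take n),
    ← length_eq_dist_of_subwalk hp (p.isSubwalk_drop n), Walk.take_length, Walk.drop_length]
  omega

theorem IsTree.dist_add_one_eq_or_of_adj (hG : G.IsTree) (v : V) {x y : V} (h : G.Adj x y) :
    G.dist y v + 1 = G.dist x v ∨ G.dist x v + 1 = G.dist y v := by
  simp only [dist_comm (v := v)]
  exact (hG.dist_eq_dist_add_one_of_adj v h).imp Eq.symm Eq.symm

theorem IsAcyclic.eq_of_adj_of_dist_add_one_eq {u w₁ w₂ v : V} (hG : G.IsAcyclic)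
    (h₁ : G.Adj u w₁) (h₂ : G.Adj u w₂)
    (hd₁ : G.dist w₁ v + 1 = G.dist u v) (hd₂ : G.dist w₂ v + 1 = G.dist u v) :
    w₁ = w₂ := by
  have hreach : G.Reachable u v := Reachable.of_dist_ne_zero (by omega)
  have geodesic_through : ∀ w (h : G.Adj u w), G.dist w v + 1 = G.dist u v →
      ∃ P : G.Walk u v, P.IsPath ∧ P.snd = w := by
    intro w h hd
    obtain ⟨Q, hQ⟩ := (h.symm.reachable.trans hreach).exists_walk_length_eq_dist
    refine ⟨Walk.cons h Q, (Walk.cons h Q).isPath_of_length_eq_dist ?_, by simp⟩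
    rw [Walk.length_cons]
    omega
  obtain ⟨P₁, hP₁, rfl⟩ := geodesic_through w₁ h₁ hd₁
  obtain ⟨P₂, hP₂, rfl⟩ := geodesic_through w₂ h₂ hd₂
  rw [Subtype.mk.inj <| hG.subsingleton_path u v |>.elim ⟨P₁, hP₁⟩ ⟨P₂, hP₂⟩]

end SimpleGraph

theorem stmt10_general {W V : Type*} (S : SimpleGraph W) (T : SimpleGraph V)
    (hT : T.IsTree)
    (q : W → V) (hq : ∀ a b : W, S.Adj a b → T.Adj (q a) (q b))
    (vt at' bt : W) (v : V) (hv : v = q vt)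
    (hedge : S.Adj at' bt)
    -- `ẽ` is oriented toward `vt` in `T̃`:
    (htoward : S.dist bt vt + 1 = S.dist at' vt)
    -- `q(ẽ)` is not oriented toward `v` in `T`:
    (hnottoward : ¬ (T.dist (q bt) v + 1 = T.dist (q at') v)) :
    ∃ p w₁ w₂ : W,
      -- `p`, `w₁`, `w₂` lie on the geodesic from `at'` to `vt` in `T̃`:
      S.dist at' p + S.dist p vt = S.dist at' vt ∧
      S.dist at' w₁ + S.dist w₁ vt = S.dist at' vt ∧
      S.dist at' w₂ + S.dist w₂ vt = S.dist at' vt ∧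
      -- `(p, w₁)`, `(p, w₂)` form a collapsing pair (a point of backtracking
      -- of the image path):
      S.Adj p w₁ ∧ S.Adj p w₂ ∧ w₁ ≠ w₂ ∧ q w₁ = q w₂ ∧
      -- the collapsing pair faces `v`:
      T.dist (q p) v = T.dist (q w₁) v + 1 := by
  have hreach : S.Reachable bt vt :=
    hedge.symm.reachable.trans (Reachable.of_dist_ne_zero (by omega))
  obtain ⟨Q, hQ⟩ := hreach.exists_walk_length_eq_dist
  set P := Walk.cons hedge Q
  have hP : P.length = S.dist at' vt := by simp [P, hQ, ← htoward]
  have hstep (j : ℕ) (hj : j < P.length) :=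
    hT.dist_add_one_eq_or_of_adj v (hq _ _ (P.adj_getVert_succ hj))
  have hup : T.dist (q (P.getVert 0)) v + 1 = T.dist (q (P.getVert 1)) v := by
    have h₀ := hstep 0 (by simp [P])
    simp only [P, Walk.getVert_zero, Walk.getVert_cons_succ] at h₀ ⊢
    exact h₀.resolve_left hnottoward
  obtain ⟨i, hi, hpeak_up, hpeak_down⟩ := exists_peak_of_unit_steps
    (fun j ↦ T.dist (q (P.getVert j)) v) P.length (by simp [P]) hstep hup (by simp [← hv])
  have hadj_up : S.Adj (P.getVert i) (P.getVert (i + 1)) := P.adj_getVert_succ (by omega)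
  have hadj_down : S.Adj (P.getVert (i + 1)) (P.getVert (i + 2)) := P.adj_getVert_succ (by omega)
  refine ⟨P.getVert (i + 1), P.getVert i, P.getVert (i + 2),
    Walk.dist_getVert_add_dist_getVert_of_length_eq_dist hP _,
    Walk.dist_getVert_add_dist_getVert_of_length_eq_dist hP _,
    Walk.dist_getVert_add_dist_getVert_of_length_eq_dist hP _,
    hadj_up.symm, hadj_down, fun h ↦ ?_,
    hT.isAcyclic.eq_of_adj_of_dist_add_one_eq (hq _ _ hadj_up.symm) (hq _ _ hadj_down)
      hpeak_up hpeak_down, hpeak_up.symm⟩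
  have := congrArg (S.dist at') h
  rw [Walk.dist_getVert_of_length_eq_dist hP (by omega),
    Walk.dist_getVert_of_length_eq_dist hP hi] at this
  omega

/-- Let `q : T̃ → T` be a `G`-equivariant tree morphism, `v = q vt`
a vertex of `T` in the image, and `ẽ = (at', bt)` an oriented edge of `T̃`
belonging to a collapsing pair and oriented toward `vt`, with `q(ẽ)` not
oriented toward `v`.  Then the image under `q` of the geodesic from `ẽ` to `vt`
contains a point of backtracking, i.e. there is a collapsing pair whose
vertices lie on that geodesic and which faces `v`. -/
theorem stmt10 {W V : Type*} (S : SimpleGraph W) (T : SimpleGraph V)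
    (hS : S.IsTree) (hT : T.IsTree)
    (G : Type*) [Group G] [MulAction G W] [MulAction G V]
    (hactS : ∀ (g : G) (x y : W), S.Adj x y → S.Adj (g • x) (g • y))
    (hactT : ∀ (g : G) (x y : V), T.Adj x y → T.Adj (g • x) (g • y))
    (q : W → V) (hq : ∀ a b : W, S.Adj a b → T.Adj (q a) (q b))
    (hequiv : ∀ (g : G) (w : W), q (g • w) = g • q w)
    (vt at' bt : W) (v : V) (hv : v = q vt)
    (hedge : S.Adj at' bt)
    -- `ẽ = (at', bt)` belongs to a collapsing pair:
    (hpair : ∃ ct : W, S.Adj at' ct ∧ ct ≠ bt ∧ q ct = q bt)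
    -- `ẽ` is oriented toward `vt` in `T̃`:
    (htoward : S.dist bt vt + 1 = S.dist at' vt)
    -- `q(ẽ)` is not oriented toward `v` in `T`:
    (hnottoward : ¬ (T.dist (q bt) v + 1 = T.dist (q at') v)) :
    ∃ p w₁ w₂ : W,
      -- `p`, `w₁`, `w₂` lie on the geodesic from `at'` to `vt` in `T̃`:
      S.dist at' p + S.dist p vt = S.dist at' vt ∧
      S.dist at' w₁ + S.dist w₁ vt = S.dist at' vt ∧
      S.dist at' w₂ + S.dist w₂ vt = S.dist at' vt ∧
      -- `(p, w₁)`, `(p, w₂)` form a collapsing pair (a point of backtracking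
      -- of the image path):
      S.Adj p w₁ ∧ S.Adj p w₂ ∧ w₁ ≠ w₂ ∧ q w₁ = q w₂ ∧
      -- the collapsing pair faces `v`:
      T.dist (q p) v = T.dist (q w₁) v + 1 :=
  stmt10_general S T hT q hq vt at' bt v hv hedge htoward hnottoward
end

section
/- Let q : T̃ → T be a locally surjective G-equivariant morphism of trees and let E be an end of T. Then the set q^{-1}(E) of ends of T̃ represented by lifts of geodesic rays representing E is a singleton if and only if there is no collapsing pair facing E. -/
/-- Two geodesic rays represent the same end iff they eventually coincide. -/
def RayEquiv {V : Type*} (τ σ : ℕ → V) : Prop :=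
  ∃ k l : ℕ, ∀ n : ℕ, τ (k + n) = σ (l + n)

/-- `σ` is a lift under `q` of a geodesic ray of `T` representing the same end
as `τ`: `σ` is a geodesic ray of `T̃` and `q ∘ σ` is a geodesic ray of `T`
equivalent to `τ`. -/
def IsLiftOfEnd {W V : Type*} (S : SimpleGraph W) (T : SimpleGraph V)
    (q : W → V) (τ : ℕ → V) (σ : ℕ → W) : Prop :=
  IsGeodRay S σ ∧ IsGeodRay T (fun n => q (σ n)) ∧ RayEquiv (fun n => q (σ n)) τ

/-- A collapsing pair under `q` faces the end represented by `τ`. -/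
def CollapsingPairFacesRay {W V : Type*} (S : SimpleGraph W) (T : SimpleGraph V)
    (q : W → V) (τ : ℕ → V) : Prop :=
  ∃ p w₁ w₂ : W, S.Adj p w₁ ∧ S.Adj p w₂ ∧ w₁ ≠ w₂ ∧ q w₁ = q w₂ ∧
    ∃ N : ℕ, ∀ n ≥ N, T.dist (q p) (τ n) = T.dist (q w₁) (τ n) + 1

/-!
Orient every edge of `T` towards the end `E`. In a tree every vertex then has exactly one
outgoing edge, and `τ` follows outgoing edges. Pull the orientation back along `q`: by local
surjectivity every vertex of `T̃` has an outgoing edge, and a collapsing pair facing `E` is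
precisely a vertex with two of them. Every lift of `E` eventually follows outgoing edges.

If outgoing edges are unique, "the forward orbits meet" is an equivalence relation containing
adjacency, so on the connected tree `T̃` any two forward orbits, and hence any two lifts,
eventually coincide. If a vertex `p` has two outgoing edges, the forward orbits through them,
started at `p`, are two lifts with the same projection; in a tree they can only eventually
coincide if they agree from the start.
-/

open SimpleGraph Relation

section Chains

variable {α : Type*} {r : α → α → Prop}

theorem exists_chain_of_forall_exists (h : ∀ x, ∃ y, r x y) (a : α) :
    ∃ f : ℕ → α, f 0 = a ∧ ∀ n, r (f n) (f (n + 1)) := by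
  choose next hnext using h
  exact ⟨fun n => next^[n] a, rfl, fun n => by
    simpa only [Function.iterate_succ_apply'] using hnext _⟩

namespace Relator.RightUnique

theorem chain_eq (hr : Relator.RightUnique r) {f g : ℕ → α}
    (hf : ∀ n, r (f n) (f (n + 1))) (hg : ∀ n, r (g n) (g (n + 1))) (h0 : f 0 = g 0) :
    f = g := by
  funext n
  induction n with
  | zero => exact h0
  | succ n ih => exact hr (hf n) (ih ▸ hg n)

theorem exists_chain_eq_of_reflTransGen (hr : Relator.RightUnique r) {f : ℕ → α}
    (hf : ∀ n, r (f n) (f (n + 1))) {z : α} (hz : ReflTransGen r (f 0) z) : ∃ m, f m = z := by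
  induction hz with
  | refl => exact ⟨0, rfl⟩
  | tail _ hyz ih =>
    obtain ⟨m, rfl⟩ := ih
    exact ⟨m + 1, hr (hf m) hyz⟩

theorem injective_of_chain (hr : Relator.RightUnique r) {f τ : ℕ → α}
    (hf : ∀ n, r (f n) (f (n + 1))) (hfτ : RayEquiv f τ) (hτ : Function.Injective τ) :
    Function.Injective f := by
  obtain ⟨k, l, hkl⟩ := hfτ
  intro a b hab
  have htail : f (a + k) = f (b + k) :=
    congrFun (hr.chain_eq (fun n => hf (a + n)) (fun n => hf (b + n)) hab) k
  have : τ (l + a) = τ (l + b) := by rw [← hkl, ← hkl, add_comm k a, add_comm k b, htail]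
  exact Nat.add_left_cancel (hτ this)

/-- Joinability by forward orbits is an equivalence relation containing adjacency. -/
theorem rayEquiv_of_connected (hr : Relator.RightUnique r) {G : SimpleGraph α}
    (hG : G.Connected) (hadj : ∀ x y, G.Adj x y → r x y ∨ r y x) {f g : ℕ → α}
    (hf : ∀ n, r (f n) (f (n + 1))) (hg : ∀ n, r (g n) (g (n + 1))) : RayEquiv f g := by
  have hequiv : Equivalence (Join (ReflTransGen r)) :=
    equivalence_join_reflTransGen fun _ b _ hab hac => ⟨b, .refl, hr hab hac ▸ .refl⟩
  have hjoin (x y : α) (hxy : ReflTransGen G.Adj x y) : Join (ReflTransGen r) x y := by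
    induction hxy with
    | refl => exact hequiv.refl _
    | tail _ hyz ih =>
      refine hequiv.trans ih ?_
      rcases hadj _ _ hyz with h | h
      · exact ⟨_, .single h, .refl⟩
      · exact ⟨_, .refl, .single h⟩
  obtain ⟨z, hfz, hgz⟩ := hjoin _ _ ((reachable_iff_reflTransGen _ _).1 (hG (f 0) (g 0)))
  obtain ⟨m, rfl⟩ := hr.exists_chain_eq_of_reflTransGen hf hfz
  obtain ⟨m', hm'⟩ := hr.exists_chain_eq_of_reflTransGen hg hgz
  exact ⟨m, m', congrFun (hr.chain_eq (fun n => hf (m + n)) (fun n => hg (m' + n)) hm'.symm)⟩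

end Relator.RightUnique

end Chains

namespace SimpleGraph

variable {V : Type*} {G : SimpleGraph V}

theorem IsAcyclic.eq_of_adj_of_dist_eq_add_one (hG : G.IsAcyclic) {v u₁ u₂ w : V}
    (h₁ : G.Adj v u₁) (h₂ : G.Adj v u₂) (hd₁ : G.dist v w = G.dist u₁ w + 1)
    (hd₂ : G.dist v w = G.dist u₂ w + 1) : u₁ = u₂ := by
  have hvw : G.Reachable v w := Reachable.of_dist_ne_zero (by omega)
  have geodesic_via (u : V) (h : G.Adj v u) (hd : G.dist v w = G.dist u w + 1) :
      ∃ p : G.Walk u w, (Walk.cons h p).IsPath := by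
    obtain ⟨p, hp⟩ := (h.symm.reachable.trans hvw).exists_walk_length_eq_dist
    exact ⟨p, (Walk.cons h p).isPath_of_length_eq_dist (by simp [hp, hd])⟩
  obtain ⟨p₁, hp₁⟩ := geodesic_via u₁ h₁ hd₁
  obtain ⟨p₂, hp₂⟩ := geodesic_via u₂ h₂ hd₂
  have := (hG.subsingleton_path v w).elim ⟨_, hp₁⟩ ⟨_, hp₂⟩
  simpa using congrArg (fun p : G.Path v w => p.1.snd) this

end SimpleGraph

namespace IsGeodRay

variable {V : Type*} {G : SimpleGraph V} {τ : ℕ → V}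

theorem dist_add (hG : G.IsAcyclic) (hτ : IsGeodRay G τ) (a k : ℕ) :
    G.dist (τ a) (τ (a + k)) = k := by
  suffices ∀ k, G.dist (τ a) (τ (a + k)) = k ∧ G.dist (τ a) (τ (a + k + 1)) = k + 1 from
    (this k).1
  intro k
  induction k with
  | zero => exact ⟨by simp, dist_eq_one_iff_adj.2 (hτ.1 a)⟩
  | succ k ih =>
    refine ⟨ih.2, show G.dist (τ a) (τ (a + k + 1 + 1)) = k + 1 + 1 from ?_⟩
    have hreach : G.Reachable (τ a) (τ (a + k + 1)) := Reachable.of_dist_ne_zero (by omega)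
    rcases hG.dist_eq_dist_add_one_of_adj_of_reachable (τ a) (hτ.1 _) hreach with h | h
    · have : τ (a + k) = τ (a + k + 1 + 1) :=
        hG.eq_of_adj_of_dist_eq_add_one (hτ.1 (a + k)).symm (hτ.1 (a + k + 1))
          (by rw [dist_comm, ih.2, dist_comm, ih.1])
          (by rw [dist_comm, ih.2, dist_comm]; omega)
      exact absurd (hτ.2 this) (by omega)
    · omega

theorem apply_one_eq_of_apply_succ_eq (hG : G.IsAcyclic) {σ₁ σ₂ : ℕ → V} (hσ₁ : IsGeodRay G σ₁)
    (hσ₂ : IsGeodRay G σ₂) (h0 : σ₁ 0 = σ₂ 0) {n : ℕ}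
    (hn : σ₁ (n + 1) = σ₂ (n + 1)) : σ₁ 1 = σ₂ 1 := by
  have hdist {σ : ℕ → V} (hσ : IsGeodRay G σ) :
      G.dist (σ 0) (σ (n + 1)) = G.dist (σ 1) (σ (n + 1)) + 1 := by
    have h₀ := hσ.dist_add hG 0 (n + 1)
    have h₁ := hσ.dist_add hG 1 n
    rw [zero_add] at h₀
    rw [add_comm 1 n] at h₁
    omega
  exact hG.eq_of_adj_of_dist_eq_add_one (hσ₁.1 0) (h0 ▸ hσ₂.1 0) (hdist hσ₁)
    (by rw [hn, h0]; exact hdist hσ₂)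

/-- The Busemann function `n ↦ dist v (τ n) - n` is non-increasing and bounded below, hence
eventually constant. -/
theorem exists_dist_add_eq (hG : G.IsTree) (hτ : IsGeodRay G τ) (v : V) :
    ∃ j, ∀ n ≥ j, G.dist v (τ n) + j = G.dist v (τ j) + n := by
  have hlow (n : ℕ) : n ≤ G.dist v (τ n) + G.dist v (τ 0) := by
    have := hτ.dist_add hG.isAcyclic 0 n
    have := hG.connected.dist_triangle (u := τ 0) (v := v) (w := τ n)
    have : G.dist (τ 0) v = G.dist v (τ 0) := dist_comm
    rw [zero_add] at *
    omega
  set g : ℕ → ℕ := fun n => G.dist v (τ n) + G.dist v (τ 0) - n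
  have hg : Antitone g := antitone_nat_of_succ_le fun n => by
    have := hG.connected.dist_triangle (u := v) (v := τ n) (w := τ (n + 1))
    have := dist_eq_one_iff_adj.2 (hτ.1 n)
    simp only [g]
    omega
  obtain ⟨j, hj⟩ : ∃ j, ∀ n, g j ≤ g n := ⟨_, fun n => Function.argmin_le g n⟩
  refine ⟨j, fun n hn => ?_⟩
  have := hj n
  have := hg hn
  have := hlow n
  have := hlow j
  simp only [g] at *
  omega

end IsGeodRay

section StepsToward

variable {V : Type*} {T : SimpleGraph V} {τ : ℕ → V}

/-- `v → u` is an edge of `T` oriented towards the end represented by `τ`. -/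
def StepsToward (T : SimpleGraph V) (τ : ℕ → V) (v u : V) : Prop :=
  T.Adj v u ∧ ∃ N, ∀ n ≥ N, T.dist v (τ n) = T.dist u (τ n) + 1

theorem rightUnique_stepsToward (hT : T.IsAcyclic) : Relator.RightUnique (StepsToward T τ) := by
  rintro v u₁ u₂ ⟨h₁, N₁, hN₁⟩ ⟨h₂, N₂, hN₂⟩
  exact hT.eq_of_adj_of_dist_eq_add_one h₁ h₂ (hN₁ (max N₁ N₂) (le_max_left _ _))
    (hN₂ (max N₁ N₂) (le_max_right _ _))

theorem IsGeodRay.stepsToward_succ (hT : T.IsAcyclic) (hτ : IsGeodRay T τ) (n : ℕ) :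
    StepsToward T τ (τ n) (τ (n + 1)) := by
  refine ⟨hτ.1 n, n + 1, fun m hm => ?_⟩
  obtain ⟨k, rfl⟩ := Nat.exists_eq_add_of_le hm
  rw [hτ.dist_add hT, add_assoc, hτ.dist_add hT]
  omega

theorem IsGeodRay.exists_stepsToward (hT : T.IsTree) (hτ : IsGeodRay T τ) (v : V) :
    ∃ u, StepsToward T τ v u := by
  obtain ⟨j, hj⟩ := hτ.exists_dist_add_eq hT v
  have hdist : T.dist v (τ (j + 1)) = T.dist v (τ j) + 1 := by have := hj (j + 1); omega
  obtain ⟨p, hp⟩ := hT.connected.exists_walk_length_eq_dist v (τ (j + 1))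
  cases p with
  | nil => simp at hdist
  | @cons _ u _ hvu p =>
    refine ⟨u, hvu, j + 1, fun n hn => ?_⟩
    obtain ⟨k, rfl⟩ := Nat.exists_eq_add_of_le hn
    have := hj (j + 1 + k) (by omega)
    have := hT.connected.dist_triangle (u := u) (v := τ (j + 1)) (w := τ (j + 1 + k))
    have := hT.connected.dist_triangle (u := v) (v := u) (w := τ (j + 1 + k))
    have := dist_le p
    have := dist_eq_one_iff_adj.2 hvu
    rw [hτ.dist_add hT.isAcyclic] at *
    simp only [Walk.length_cons] at hp
    omega

theorem IsGeodRay.stepsToward_or_stepsToward (hT : T.IsTree) (hτ : IsGeodRay T τ) {v u : V}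
    (h : T.Adj v u) : StepsToward T τ v u ∨ StepsToward T τ u v := by
  obtain ⟨u', hu', N, hN⟩ := hτ.exists_stepsToward hT v
  by_cases hu : u = u'
  · exact .inl (hu ▸ ⟨hu', N, hN⟩)
  refine .inr ⟨h.symm, N, fun n hn => ?_⟩
  rcases hT.dist_eq_dist_add_one_of_adj (τ n) h with h' | h'
  · refine absurd (hT.isAcyclic.eq_of_adj_of_dist_eq_add_one h hu' ?_ (hN n hn)) hu
    rw [SimpleGraph.dist_comm, h', SimpleGraph.dist_comm]
  · rw [SimpleGraph.dist_comm, h', SimpleGraph.dist_comm]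

end StepsToward

section Lift

variable {W V : Type*} {S : SimpleGraph W} {T : SimpleGraph V} {q : W → V} {τ : ℕ → V}

def LiftStepsToward (S : SimpleGraph W) (T : SimpleGraph V) (q : W → V) (τ : ℕ → V)
    (x y : W) : Prop :=
  S.Adj x y ∧ StepsToward T τ (q x) (q y)

theorem not_collapsingPairFacesRay_iff (hT : T.IsAcyclic)
    (hq : ∀ a b : W, S.Adj a b → T.Adj (q a) (q b)) :
    ¬ CollapsingPairFacesRay S T q τ ↔ Relator.RightUnique (LiftStepsToward S T q τ) := by
  constructor
  · intro hnc x y₁ y₂ h₁ h₂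
    by_contra hne
    exact hnc ⟨x, y₁, y₂, h₁.1, h₂.1, hne, rightUnique_stepsToward hT h₁.2 h₂.2, h₁.2.2⟩
  · rintro hD ⟨p, w₁, w₂, h₁, h₂, hne, hq₁₂, hface⟩
    exact hne (hD ⟨h₁, hq _ _ h₁, hface⟩ ⟨h₂, hq _ _ h₂, hq₁₂ ▸ hface⟩)

theorem IsGeodRay.exists_liftStepsToward (hT : T.IsTree) (hτ : IsGeodRay T τ)
    (hlocsurj : ∀ (w : W) (v' : V), T.Adj (q w) v' → ∃ w' : W, S.Adj w w' ∧ q w' = v')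
    (x : W) : ∃ y, LiftStepsToward S T q τ x y := by
  obtain ⟨u, hu⟩ := hτ.exists_stepsToward hT (q x)
  obtain ⟨y, hxy, rfl⟩ := hlocsurj x u hu.1
  exact ⟨y, hxy, hu⟩

theorem IsGeodRay.isLiftOfEnd_of_chain (hT : T.IsTree) (hτ : IsGeodRay T τ) {σ : ℕ → W}
    (hσ : ∀ n, LiftStepsToward S T q τ (σ n) (σ (n + 1))) : IsLiftOfEnd S T q τ σ := by
  have hr := rightUnique_stepsToward (τ := τ) hT.isAcyclic
  have hqσ : ∀ n, StepsToward T τ (q (σ n)) (q (σ (n + 1))) := fun n => (hσ n).2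
  have hequiv : RayEquiv (fun n => q (σ n)) τ :=
    hr.rayEquiv_of_connected hT.connected (fun _ _ => hτ.stepsToward_or_stepsToward hT) hqσ
      (hτ.stepsToward_succ hT.isAcyclic)
  have hinj := hr.injective_of_chain hqσ hequiv hτ.2
  exact ⟨⟨fun n => (hσ n).1, hinj.of_comp⟩, ⟨fun n => (hqσ n).1, hinj⟩, hequiv⟩

theorem IsGeodRay.exists_isLiftOfEnd [Nonempty W] (hT : T.IsTree) (hτ : IsGeodRay T τ)
    (hlocsurj : ∀ (w : W) (v' : V), T.Adj (q w) v' → ∃ w' : W, S.Adj w w' ∧ q w' = v') :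
    ∃ σ, IsLiftOfEnd S T q τ σ := by
  obtain ⟨σ, -, hσ⟩ :=
    exists_chain_of_forall_exists (hτ.exists_liftStepsToward hT hlocsurj) (Classical.arbitrary W)
  exact ⟨σ, hτ.isLiftOfEnd_of_chain hT hσ⟩

theorem IsLiftOfEnd.exists_chain_tail (hT : T.IsAcyclic) (hτ : IsGeodRay T τ) {σ : ℕ → W}
    (hσ : IsLiftOfEnd S T q τ σ) :
    ∃ k, ∀ n, LiftStepsToward S T q τ (σ (k + n)) (σ (k + (n + 1))) := by
  obtain ⟨⟨hadj, -⟩, -, k, l, hkl⟩ := hσ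
  refine ⟨k, fun n => ⟨hadj _, ?_⟩⟩
  rw [show q (σ (k + n)) = τ (l + n) from hkl n, show q (σ (k + (n + 1))) = τ (l + (n + 1)) from
    hkl (n + 1)]
  exact hτ.stepsToward_succ hT (l + n)

theorem IsGeodRay.rayEquiv_of_isLiftOfEnd (hS : S.Connected) (hT : T.IsTree)
    (hτ : IsGeodRay T τ) (hq : ∀ a b : W, S.Adj a b → T.Adj (q a) (q b))
    (hD : Relator.RightUnique (LiftStepsToward S T q τ)) {σ₁ σ₂ : ℕ → W}
    (h₁ : IsLiftOfEnd S T q τ σ₁) (h₂ : IsLiftOfEnd S T q τ σ₂) : RayEquiv σ₁ σ₂ := by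
  obtain ⟨k₁, hk₁⟩ := h₁.exists_chain_tail hT.isAcyclic hτ
  obtain ⟨k₂, hk₂⟩ := h₂.exists_chain_tail hT.isAcyclic hτ
  have hadj (x y : W) (h : S.Adj x y) :
      LiftStepsToward S T q τ x y ∨ LiftStepsToward S T q τ y x :=
    (hτ.stepsToward_or_stepsToward hT (hq x y h)).imp (⟨h, ·⟩) (⟨h.symm, ·⟩)
  obtain ⟨a, b, hab⟩ := hD.rayEquiv_of_connected hS hadj hk₁ hk₂
  exact ⟨k₁ + a, k₂ + b, fun n => by simpa only [add_assoc] using hab n⟩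

theorem IsGeodRay.eq_of_liftStepsToward (hS : S.IsAcyclic) (hT : T.IsTree) (hτ : IsGeodRay T τ)
    (hlocsurj : ∀ (w : W) (v' : V), T.Adj (q w) v' → ∃ w' : W, S.Adj w w' ∧ q w' = v')
    (huniq : ∀ σ₁ σ₂ : ℕ → W, IsLiftOfEnd S T q τ σ₁ → IsLiftOfEnd S T q τ σ₂ →
      RayEquiv σ₁ σ₂)
    {p w₁ w₂ : W} (h₁ : LiftStepsToward S T q τ p w₁) (h₂ : LiftStepsToward S T q τ p w₂) :
    w₁ = w₂ := by
  have chain_through (w : W) (hw : LiftStepsToward S T q τ p w) :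
      ∃ σ : ℕ → W, σ 0 = p ∧ σ 1 = w ∧ ∀ n, LiftStepsToward S T q τ (σ n) (σ (n + 1)) := by
    obtain ⟨f, hf0, hf⟩ :=
      exists_chain_of_forall_exists (hτ.exists_liftStepsToward hT hlocsurj) w
    exact ⟨fun | 0 => p | n + 1 => f n, rfl, hf0, fun
      | 0 => show LiftStepsToward S T q τ p (f 0) from hf0 ▸ hw
      | n + 1 => hf n⟩
  obtain ⟨σ₁, hσ₁0, hσ₁1, hσ₁⟩ := chain_through w₁ h₁
  obtain ⟨σ₂, hσ₂0, hσ₂1, hσ₂⟩ := chain_through w₂ h₂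
  have hl₁ := hτ.isLiftOfEnd_of_chain hT hσ₁
  have hl₂ := hτ.isLiftOfEnd_of_chain hT hσ₂
  have hproj : (fun n => q (σ₁ n)) = fun n => q (σ₂ n) :=
    (rightUnique_stepsToward hT.isAcyclic).chain_eq (fun n => (hσ₁ n).2) (fun n => (hσ₂ n).2)
      (by simp only [hσ₁0, hσ₂0])
  obtain ⟨k, l, hkl⟩ := huniq σ₁ σ₂ hl₁ hl₂
  obtain rfl : k = l := hl₁.2.1.2 ((congrArg q (hkl 0)).trans (congrFun hproj l).symm)
  rw [← hσ₁1, ← hσ₂1]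
  exact hl₁.1.apply_one_eq_of_apply_succ_eq hS hl₂.1 (hσ₁0.trans hσ₂0.symm) (hkl 1)

end Lift

theorem stmt11_general {W V : Type*} (S : SimpleGraph W) (T : SimpleGraph V)
    (hS : S.IsTree) (hT : T.IsTree)
    (q : W → V) (hq : ∀ a b : W, S.Adj a b → T.Adj (q a) (q b))
    (hlocsurj : ∀ (w : W) (v' : V), T.Adj (q w) v' → ∃ w' : W, S.Adj w w' ∧ q w' = v')
    (τ : ℕ → V) (hτ : IsGeodRay T τ) :
    ((∃ σ : ℕ → W, IsLiftOfEnd S T q τ σ) ∧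
        ∀ σ₁ σ₂ : ℕ → W, IsLiftOfEnd S T q τ σ₁ → IsLiftOfEnd S T q τ σ₂ →
          RayEquiv σ₁ σ₂) ↔
      ¬ CollapsingPairFacesRay S T q τ := by
  rw [not_collapsingPairFacesRay_iff hT.isAcyclic hq]
  constructor
  · rintro ⟨-, huniq⟩ p w₁ w₂ h₁ h₂
    exact hτ.eq_of_liftStepsToward hS.isAcyclic hT hlocsurj huniq h₁ h₂
  · intro hD
    have : Nonempty W := hS.connected.nonempty
    exact ⟨hτ.exists_isLiftOfEnd hT hlocsurj,
      fun _ _ => hτ.rayEquiv_of_isLiftOfEnd hS.connected hT hq hD⟩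

/-- Let `q : T̃ → T` be a locally surjective `G`-equivariant
morphism of trees and `E` an end of `T`, represented by a geodesic ray `τ`.
Then `q⁻¹(E)` — the set of ends of `T̃` represented by lifts of rays
representing `E` — is a singleton if and only if no collapsing pair faces `E`. -/
theorem stmt11 {W V : Type*} (S : SimpleGraph W) (T : SimpleGraph V)
    (hS : S.IsTree) (hT : T.IsTree)
    (G : Type*) [Group G] [MulAction G W] [MulAction G V]
    (hactS : ∀ (g : G) (x y : W), S.Adj x y → S.Adj (g • x) (g • y))
    (hactT : ∀ (g : G) (x y : V), T.Adj x y → T.Adj (g • x) (g • y))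
    (q : W → V) (hq : ∀ a b : W, S.Adj a b → T.Adj (q a) (q b))
    (hequiv : ∀ (g : G) (w : W), q (g • w) = g • q w)
    (hlocsurj : ∀ (w : W) (v' : V), T.Adj (q w) v' → ∃ w' : W, S.Adj w w' ∧ q w' = v')
    (τ : ℕ → V) (hτ : IsGeodRay T τ) :
    ((∃ σ : ℕ → W, IsLiftOfEnd S T q τ σ) ∧
        ∀ σ₁ σ₂ : ℕ → W, IsLiftOfEnd S T q τ σ₁ → IsLiftOfEnd S T q τ σ₂ →
          RayEquiv σ₁ σ₂) ↔
      ¬ CollapsingPairFacesRay S T q τ :=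
  stmt11_general S T hS hT q hq hlocsurj τ hτ
end
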